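/- arXiv:2110.13499 — 3 statements merged into one kernel-verified Lean document; each statement's English description precedes it below -/
import Mathlib

section
/- Beaver's multiplication protocol is correct: given additive sharings [α], [β] of α, β in Z_{2^l} and a sharing of a triple (t₁, t₂, t₃) with t₃ = t₁·t₂, if each party P_i computes e_i = [α]_i − [t₁]_i, f_i = [β]_i − [t₂]_i, reconstructs e = e_0 + e_1 and f = f_0 + f_1, and outputs z_i = i·e·f + [t₁]_i·f + [t₂]_i·e + [t₃]_i, then z_0 + z_1 = α·β in Z_{2^l}. -/
/-! With `e = α - t₁` and `f = β - t₂` public, `α β = (e + t₁)(f + t₂) = e f + t₁ f + t₂ e + t₁ t₂`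
is affine in the shared values `t₁, t₂, t₃ = t₁ t₂`, so it can be shared locally, the constant
`e f` being added by one party only. -/

theorem mul_eq_beaver_expansion {R : Type*} [CommRing R] (α β t₁ t₂ : R) :
    (α - t₁) * (β - t₂) + t₁ * (β - t₂) + t₂ * (α - t₁) + t₁ * t₂ = α * β := by
  ring

theorem beaver_multiplication_correct (l : ℕ)
    (α β t1 t2 t3 a0 a1 b0 b1 t10 t11 t20 t21 t30 t31 : ZMod (2 ^ l))
    (ha : a0 + a1 = α) (hb : b0 + b1 = β)
    (ht1 : t10 + t11 = t1) (ht2 : t20 + t21 = t2) (ht3 : t30 + t31 = t3)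
    (htriple : t3 = t1 * t2)
    (e f : ZMod (2 ^ l))
    (he : e = (a0 - t10) + (a1 - t11)) (hf : f = (b0 - t20) + (b1 - t21)) :
    ((0 : ZMod (2 ^ l)) * e * f + t10 * f + t20 * e + t30) +
      ((1 : ZMod (2 ^ l)) * e * f + t11 * f + t21 * e + t31) = α * β := by
  have he' : e = α - t1 := by rw [he, sub_add_sub_comm, ha, ht1]
  have hf' : f = β - t2 := by rw [hf, sub_add_sub_comm, hb, ht2]
  calc ((0 : ZMod (2 ^ l)) * e * f + t10 * f + t20 * e + t30) +
        ((1 : ZMod (2 ^ l)) * e * f + t11 * f + t21 * e + t31)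
      = e * f + t1 * f + t2 * e + t3 := by rw [← ht1, ← ht2, ← ht3]; ring
    _ = α * β := by rw [htriple, he', hf', mul_eq_beaver_expansion]
end

section
/- The Rényi divergence of order α between two Gaussian distributions N(μ₀, σ²) and N(μ₁, σ²) with equal variance equals α(μ₀ − μ₁)²/(2σ²). Consequently, the Gaussian mechanism that adds N(0, σ²) noise to a real-valued function f with sensitivity Δ (|f(D) − f(D')| ≤ Δ for adjacent D, D') satisfies (α, αΔ²/(2σ²))-RDP. -/
open MeasureTheory Real

/-- The Gaussian density with mean `μ` and variance `σ²`. -/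
noncomputable def gaussDensity (μ σ x : ℝ) : ℝ :=
  (1 / (σ * Real.sqrt (2 * Real.pi))) * Real.exp (-(x - μ) ^ 2 / (2 * σ ^ 2))

/-- Rényi divergence of order `α` between continuous densities `p` and `q` on ℝ:
`(1/(α−1)) · log ∫ p(x)^α · q(x)^{1−α} dx`. -/
noncomputable def renyiDivCont (α : ℝ) (p q : ℝ → ℝ) : ℝ :=
  (α - 1)⁻¹ * Real.log (∫ x : ℝ, p x ^ α * q x ^ (1 - α))

lemma gaussDensity_eq (μ σ : ℝ) (hσ : 0 < σ) :
    gaussDensity μ σ = ProbabilityTheory.gaussianPDFReal μ ⟨σ ^ 2, sq_nonneg σ⟩ := by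
  funext x
  simp only [gaussDensity, ProbabilityTheory.gaussianPDFReal, NNReal.coe_mk]
  have h : Real.sqrt (2 * π * σ ^ 2) = σ * Real.sqrt (2 * π) := by
    rw [Real.sqrt_mul (by positivity), Real.sqrt_sq hσ.le]; ring
  show _ = (Real.sqrt (2 * π * σ ^ 2))⁻¹ * Real.exp (-(x - μ) ^ 2 / (2 * σ ^ 2))
  rw [h, one_div]

lemma integral_gaussDensity (μ σ : ℝ) (hσ : 0 < σ) :
    ∫ x : ℝ, gaussDensity μ σ x = 1 := by
  rw [gaussDensity_eq μ σ hσ]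
  exact ProbabilityTheory.integral_gaussianPDFReal_eq_one μ
    (fun h => (pow_pos hσ 2).ne' (by
      have := congrArg NNReal.toReal h; rw [NNReal.coe_zero] at this; exact this))

lemma key (α σ μ₀ μ₁ : ℝ) (hσ : 0 < σ) (x : ℝ) :
    gaussDensity μ₀ σ x ^ α * gaussDensity μ₁ σ x ^ (1 - α) =
      Real.exp (α * (α - 1) * (μ₀ - μ₁) ^ 2 / (2 * σ ^ 2)) *
        gaussDensity (α * μ₀ + (1 - α) * μ₁) σ x := by
  have hC : (0:ℝ) < 1 / (σ * Real.sqrt (2 * Real.pi)) := by positivity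
  simp only [gaussDensity]
  rw [Real.mul_rpow hC.le (Real.exp_pos _).le, Real.mul_rpow hC.le (Real.exp_pos _).le,
    ← Real.exp_mul, ← Real.exp_mul]
  rw [show (1 / (σ * Real.sqrt (2 * Real.pi))) ^ α * Real.exp (-(x - μ₀) ^ 2 / (2 * σ ^ 2) * α) *
      ((1 / (σ * Real.sqrt (2 * Real.pi))) ^ (1 - α) *
        Real.exp (-(x - μ₁) ^ 2 / (2 * σ ^ 2) * (1 - α))) =
      ((1 / (σ * Real.sqrt (2 * Real.pi))) ^ α * (1 / (σ * Real.sqrt (2 * Real.pi))) ^ (1 - α)) *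
      (Real.exp (-(x - μ₀) ^ 2 / (2 * σ ^ 2) * α) *
        Real.exp (-(x - μ₁) ^ 2 / (2 * σ ^ 2) * (1 - α))) by ring,
    ← Real.rpow_add hC, ← Real.exp_add]
  rw [show α + (1 - α) = 1 by ring, Real.rpow_one]
  rw [show Real.exp (α * (α - 1) * (μ₀ - μ₁) ^ 2 / (2 * σ ^ 2)) *
      (1 / (σ * Real.sqrt (2 * Real.pi)) *
        Real.exp (-(x - (α * μ₀ + (1 - α) * μ₁)) ^ 2 / (2 * σ ^ 2))) =
      1 / (σ * Real.sqrt (2 * Real.pi)) *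
        Real.exp (α * (α - 1) * (μ₀ - μ₁) ^ 2 / (2 * σ ^ 2) +
          -(x - (α * μ₀ + (1 - α) * μ₁)) ^ 2 / (2 * σ ^ 2)) by
    rw [Real.exp_add]; ring]
  congr 2
  have hσ2 : (2 * σ ^ 2) ≠ 0 := by positivity
  field_simp
  ring

/-- The Rényi divergence between two equal-variance Gaussians is
`α(μ₀ − μ₁)²/(2σ²)`; consequently the Gaussian mechanism on a function `f` of
sensitivity `Δ` satisfies `(α, αΔ²/(2σ²))`-RDP. -/
theorem renyiDiv_gaussian_and_gaussian_mechanism_rdp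
    (α σ : ℝ) (hα : 1 < α) (hσ : 0 < σ) :
    (∀ μ₀ μ₁ : ℝ,
      renyiDivCont α (gaussDensity μ₀ σ) (gaussDensity μ₁ σ) =
        α * (μ₀ - μ₁) ^ 2 / (2 * σ ^ 2)) ∧
    (∀ (D : Type) (adj : D → D → Prop) (f : D → ℝ) (Δ : ℝ),
      (∀ d d', adj d d' → |f d - f d'| ≤ Δ) →
      ∀ d d', adj d d' →
        renyiDivCont α (gaussDensity (f d) σ) (gaussDensity (f d') σ) ≤
          α * Δ ^ 2 / (2 * σ ^ 2)) := by
  have main : ∀ μ₀ μ₁ : ℝ,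
      renyiDivCont α (gaussDensity μ₀ σ) (gaussDensity μ₁ σ) =
        α * (μ₀ - μ₁) ^ 2 / (2 * σ ^ 2) := by
    intro μ₀ μ₁
    unfold renyiDivCont
    have h1 : (∫ x : ℝ, gaussDensity μ₀ σ x ^ α * gaussDensity μ₁ σ x ^ (1 - α)) =
        Real.exp (α * (α - 1) * (μ₀ - μ₁) ^ 2 / (2 * σ ^ 2)) := by
      calc (∫ x : ℝ, gaussDensity μ₀ σ x ^ α * gaussDensity μ₁ σ x ^ (1 - α))
          = ∫ x : ℝ, Real.exp (α * (α - 1) * (μ₀ - μ₁) ^ 2 / (2 * σ ^ 2)) *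
              gaussDensity (α * μ₀ + (1 - α) * μ₁) σ x := by
            congr 1; funext x; exact key α σ μ₀ μ₁ hσ x
        _ = Real.exp (α * (α - 1) * (μ₀ - μ₁) ^ 2 / (2 * σ ^ 2)) *
              ∫ x : ℝ, gaussDensity (α * μ₀ + (1 - α) * μ₁) σ x := integral_const_mul _ _
        _ = _ := by rw [integral_gaussDensity _ σ hσ, mul_one]
    rw [h1, Real.log_exp]
    have h2 : α - 1 ≠ 0 := by linarith
    field_simp
  refine ⟨main, fun D adj f Δ hsens d d' hadj => ?_⟩
  rw [main (f d) (f d')]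
  have h3 : (f d - f d') ^ 2 ≤ Δ ^ 2 := by
    rw [← sq_abs]
    exact pow_le_pow_left₀ (abs_nonneg _) (hsens d d' hadj) 2
  gcongr
end

section
/- Correctness of the full secret-shared comparison pipeline: let a, b ∈ Z_{2^l} with canonical representatives less than 2^{l-2}, shared additively as a = [a]_0 + [a]_1 and b = [b]_0 + [b]_1 in Z_{2^l}. Let f = a − b in Z_{2^l}, with x = [f]_0 = [a]_0 − [b]_0 and y = [f]_1 = [a]_1 − [b]_1. Then the XOR of the (l−1)-th bits of x and y with the carry c_{l−1} of the binary addition of x and y equals the MSB of f, which equals 1 if and only if a < b. -/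
/-!
Subtracting shares componentwise gives shares of `f = a - b`, so `x + y ≡ f (mod 2^l)` and the
top bit of `f` is bit `l - 1` of the integer sum `x + y`, which a ripple-carry adder computes as
`x_{l-1} ⊕ y_{l-1} ⊕ c_{l-1}`. Since `a, b < 2^(l-1)`, the representative of `f` is
`a - b < 2^(l-1)` when `b ≤ a`, and `2^l - (b - a) ≥ 2^(l-1)` otherwise: its top bit is the sign.
-/

/-- The carry sequence of binary addition of `x` and `y`:
`c 0 = false`, `c (i+1) = x_i·y_i ⊕ c_i·(x_i ⊕ y_i)`. -/
def addCarry (x y : ℕ) : ℕ → Bool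
  | 0 => false
  | i + 1 => xor (x.testBit i && y.testBit i)
      (addCarry x y i && xor (x.testBit i) (y.testBit i))

theorem addCarry_eq_decide (x y i : ℕ) :
    addCarry x y i = decide (2 ^ i ≤ x % 2 ^ i + y % 2 ^ i) := by
  induction i with
  | zero => simp [addCarry, Nat.mod_one]
  | succ i ih =>
    have hx : x % 2 ^ i < 2 ^ i := Nat.mod_lt _ (by positivity)
    have hy : y % 2 ^ i < 2 ^ i := Nat.mod_lt _ (by positivity)
    rw [addCarry, ih, Nat.mod_pow_succ, Nat.mod_pow_succ (x := y), ← Nat.toNat_testBit,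
      ← Nat.toNat_testBit, pow_succ]
    cases x.testBit i <;> cases y.testBit i <;> simp <;> omega

theorem testBit_add_eq_xor_addCarry (x y i : ℕ) :
    (x + y).testBit i = xor (xor (x.testBit i) (y.testBit i)) (addCarry x y i) := by
  have h := BitVec.getLsbD_add (Nat.lt_succ_self i)
    (BitVec.ofNat (i + 1) x) (BitVec.ofNat (i + 1) y)
  simp only [BitVec.getLsbD, BitVec.carry, BitVec.toNat_add, BitVec.toNat_ofNat,
    Nat.add_mod_mod, Nat.mod_add_mod, Nat.testBit_mod_two_pow, Nat.lt_succ_self, decide_true,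
    Bool.true_and, Nat.mod_mod_of_dvd _ (Nat.pow_dvd_pow 2 (Nat.le_succ i)), Bool.toNat_false,
    add_zero, ge_iff_le, ← addCarry_eq_decide] at h
  rw [h, Bool.xor_assoc]

theorem ZMod.testBit_val_sub_iff_lt {k : ℕ} {a b : ZMod (2 ^ (k + 1))}
    (ha : a.val < 2 ^ k) (hb : b.val < 2 ^ k) :
    (a - b).val.testBit k = true ↔ a.val < b.val := by
  rcases le_or_gt b.val a.val with hba | hab
  · rw [ZMod.val_sub hba, Nat.testBit_lt_two_pow (by omega)]
    simp [hba]
  · have hneg : (a - b).val = 2 ^ (k + 1) - (b.val - a.val) := by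
      rw [← neg_sub, ZMod.neg_val', ZMod.val_sub hab.le, Nat.mod_eq_of_lt (by omega)]
    rw [hneg, Nat.testBit_of_two_pow_le_and_two_pow_add_one_gt (by omega) (by omega)]
    simp [hab]

/-- End-to-end correctness of the SCMP gadget: for `a, b ∈ Z_{2^l}` with
representatives below `2^(l-2)`, shared as `a = a0 + a1`, `b = b0 + b1`, letting
`x, y` be the representatives of the shares `a0 − b0`, `a1 − b1` of `f = a − b`,
the XOR of the `(l−1)`-th bits of `x` and `y` with the carry `c_{l−1}` of their
binary addition equals the MSB of `f`, which is `1` iff `a < b`. -/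
theorem scmp_pipeline_correct (l : ℕ) (hl : 3 ≤ l)
    (a b a0 a1 b0 b1 : ZMod (2 ^ l))
    (ha : a0 + a1 = a) (hb : b0 + b1 = b)
    (hav : a.val < 2 ^ (l - 2)) (hbv : b.val < 2 ^ (l - 2))
    (x y : ℕ) (hx : x = (a0 - b0).val) (hy : y = (a1 - b1).val) :
    (xor (xor (x.testBit (l - 1)) (y.testBit (l - 1))) (addCarry x y (l - 1)) =
      (a - b).val.testBit (l - 1)) ∧
    ((a - b).val.testBit (l - 1) = true ↔ a.val < b.val) := by
  obtain ⟨k, rfl⟩ : ∃ k, l = k + 1 := ⟨l - 1, by omega⟩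
  have hpow : 2 ^ (k + 1 - 2) ≤ 2 ^ k := Nat.pow_le_pow_right two_pos (by omega)
  have hshares : (a - b).val = (x + y) % 2 ^ (k + 1) := by
    rw [hx, hy, ← ZMod.val_add, ← ha, ← hb]
    congr 1
    ring
  rw [Nat.add_sub_cancel]
  refine ⟨?_, ZMod.testBit_val_sub_iff_lt (by omega) (by omega)⟩
  rw [hshares, Nat.testBit_mod_two_pow, testBit_add_eq_xor_addCarry,
    decide_eq_true (Nat.lt_succ_self k), Bool.true_and]
end
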